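/- arXiv:1111.6794 — 4 statements merged into one kernel-verified Lean document; each statement's English description precedes it below -/
import Mathlib

section
/- Every Whitehead automorphism of F_n lies in the subgroup of Aut(F_n) generated by the right Nielsen automorphisms ρ_{ij} (i ≠ j), the partial conjugations K_{ij} (i ≠ j), and the inversions S_i. -/
namespace FoldDecomp

open FreeGroup

variable {n : ℕ}

/-- Build an automorphism of the free group from images of generators plus an inverse system. -/
def mkAut (f g : Fin n → FreeGroup (Fin n))
    (h1 : ∀ k, FreeGroup.lift g (f k) = FreeGroup.of k)
    (h2 : ∀ k, FreeGroup.lift f (g k) = FreeGroup.of k) :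
    MulAut (FreeGroup (Fin n)) where
  toFun := FreeGroup.lift f
  invFun := FreeGroup.lift g
  left_inv := fun x => by
    have h : (FreeGroup.lift g).comp (FreeGroup.lift f) = MonoidHom.id _ :=
      FreeGroup.ext_hom _ _ (by simp [h1])
    simpa using DFunLike.congr_fun h x
  right_inv := fun x => by
    have h : (FreeGroup.lift f).comp (FreeGroup.lift g) = MonoidHom.id _ :=
      FreeGroup.ext_hom _ _ (by simp [h2])
    simpa using DFunLike.congr_fun h x
  map_mul' := map_mul _

/-- The right Nielsen automorphism `ρ i j`, sending `xᵢ ↦ xᵢxⱼ` and fixing the other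
generators. -/
def rho (i j : Fin n) (hij : i ≠ j) : MulAut (FreeGroup (Fin n)) :=
  mkAut (fun k => if k = i then of i * of j else of k)
    (fun k => if k = i then of i * (of j)⁻¹ else of k)
    (by
      intro k
      by_cases hk : k = i
      · subst hk
        simp [if_neg (Ne.symm hij)]
      · simp [hk])
    (by
      intro k
      by_cases hk : k = i
      · subst hk
        simp [if_neg (Ne.symm hij)]
      · simp [hk])

/-- The partial conjugation `K i j`, sending `xᵢ ↦ xⱼxᵢxⱼ⁻¹` and fixing the other generators. -/
def Kc (i j : Fin n) (hij : i ≠ j) : MulAut (FreeGroup (Fin n)) :=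
  mkAut (fun k => if k = i then of j * of i * (of j)⁻¹ else of k)
    (fun k => if k = i then (of j)⁻¹ * of i * of j else of k)
    (by
      intro k
      by_cases hk : k = i
      · subst hk
        simp [if_neg (Ne.symm hij)]
        group
      · simp [hk])
    (by
      intro k
      by_cases hk : k = i
      · subst hk
        simp [if_neg (Ne.symm hij)]
        group
      · simp [hk])

/-- The inversion `S i`, sending `xᵢ ↦ xᵢ⁻¹` and fixing the other generators. -/
def Sinv (i : Fin n) : MulAut (FreeGroup (Fin n)) :=
  mkAut (fun k => if k = i then (of i)⁻¹ else of k)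
    (fun k => if k = i then (of i)⁻¹ else of k)
    (by
      intro k
      by_cases hk : k = i
      · subst hk; simp
      · simp [hk])
    (by
      intro k
      by_cases hk : k = i
      · subst hk; simp
      · simp [hk])

/-- The automorphism `K i j k`, sending `xᵢ ↦ xᵢ[xⱼ,xₖ]` and fixing the other generators,
where `[a,b] = a * b * a⁻¹ * b⁻¹`. -/
def Kcom (i j k : Fin n) (hji : j ≠ i) (hki : k ≠ i) : MulAut (FreeGroup (Fin n)) :=
  mkAut (fun l => if l = i then of i * (of j * of k * (of j)⁻¹ * (of k)⁻¹) else of l)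
    (fun l => if l = i then of i * (of k * of j * (of k)⁻¹ * (of j)⁻¹) else of l)
    (by
      intro l
      by_cases hl : l = i
      · subst hl
        simp [if_neg hji, if_neg hki]
        group
      · simp [hl])
    (by
      intro l
      by_cases hl : l = i
      · subst hl
        simp [if_neg hji, if_neg hki]
        group
      · simp [hl])

/-- The element of the free group corresponding to a letter of `X ∪ X⁻¹`:
`(i, true)` stands for `xᵢ` and `(i, false)` for `xᵢ⁻¹`. -/
def wletter (a : Fin n × Bool) : FreeGroup (Fin n) :=
  cond a.2 (FreeGroup.of a.1) (FreeGroup.of a.1)⁻¹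

/-- A Whitehead automorphism of the first type: it permutes and possibly inverts the
generators. -/
def IsWhitehead₁ (φ : MulAut (FreeGroup (Fin n))) : Prop :=
  ∃ (σ : Equiv.Perm (Fin n)) (ε : Fin n → ℤ),
    (∀ i, ε i = 1 ∨ ε i = -1) ∧ ∀ i, φ (of i) = of (σ i) ^ ε i

/-- A Whitehead automorphism of the second type `(A, a)`: here `a ∈ X ∪ X⁻¹`,
`A ⊆ X ∪ X⁻¹` with `a ∈ A` and `a⁻¹ ∉ A`; letters are encoded as pairs in `Fin n × Bool`.
It fixes `x_j` if `x_j = a^{±1}`, and otherwise sends `x_j ↦ a^{α_j} x_j a^{-β_j}` where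
`α_j = χ_A(x_j)` and `β_j = χ_A(x_j⁻¹)`. -/
def IsWhitehead₂ (φ : MulAut (FreeGroup (Fin n))) : Prop :=
  ∃ (a : Fin n × Bool) (A : Finset (Fin n × Bool)),
    a ∈ A ∧ (a.1, !a.2) ∉ A ∧
    φ (of a.1) = of a.1 ∧
    ∀ j : Fin n, j ≠ a.1 →
      φ (of j) = wletter a ^ (if (j, true) ∈ A then (1 : ℤ) else 0) * of j *
        wletter a ^ (-(if (j, false) ∈ A then (1 : ℤ) else 0))

/-- A Whitehead automorphism (of first or second type). -/
def IsWhitehead (φ : MulAut (FreeGroup (Fin n))) : Prop :=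
  IsWhitehead₁ φ ∨ IsWhitehead₂ φ

/-!
A Whitehead automorphism of the first type is a permutation of the generators followed by
inversions, and a transposition `xᵢ ↔ xⱼ` is a product of Nielsen moves and one inversion.
One of the second type, with multiplier `a = xₘ^{±1}`, sends each `xⱼ` (`j ≠ m`) to
`xₘ^p xⱼ xₘ^q` and fixes `xₘ`. Since `xₘ` is fixed, these "shears" compose by adding
exponents, so they form a quotient of `(ℤ × ℤ)ⁿ`, generated by the left multiplications
`xⱼ ↦ xₘxⱼ`, which are `Kⱼₘ ρⱼₘ`, and the right multiplications `ρⱼₘ`.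
-/

theorem _root_.FreeGroup.mulEquiv_ext {α G : Type*} [Group G] {φ ψ : FreeGroup α ≃* G}
    (h : ∀ a, φ (of a) = ψ (of a)) : φ = ψ :=
  MulEquiv.toMonoidHom_injective (FreeGroup.ext_hom _ _ h)

theorem _root_.MonoidHom.map_mem_of_map_mulSingle_mem {ι M G : Type*} [Fintype ι]
    [DecidableEq ι] [CommMonoid M] [Monoid G] {S : Submonoid G} (f : (ι → M) →* G)
    (h : ∀ i a, f (Pi.mulSingle i a) ∈ S) (x : ι → M) : f x ∈ S := by
  rw [← Finset.univ_prod_mulSingle x]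
  exact Submonoid.prod_mem (S.comap f) fun i _ => h i (x i)

theorem _root_.MonoidHom.map_mem_of_map_ofAdd_single_mem {ι A G : Type*} [Fintype ι]
    [DecidableEq ι] [AddCommMonoid A] [Monoid G] {S : Submonoid G}
    (f : Multiplicative (ι → A) →* G) (h : ∀ i a, f (Multiplicative.ofAdd (Pi.single i a)) ∈ S)
    (x : Multiplicative (ι → A)) : f x ∈ S := by
  rw [← ofAdd_toAdd x, ← Finset.univ_sum_single x.toAdd, ofAdd_sum]
  exact Submonoid.prod_mem (S.comap f) fun i _ => h i _

section Shear

variable {α : Type*} [DecidableEq α]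

def shearGens (m : α) (e : α → ℤ × ℤ) (j : α) : FreeGroup α :=
  if j = m then of m else of m ^ (e j).1 * of j * of m ^ (e j).2

@[simp] theorem shearGens_self (m : α) (e : α → ℤ × ℤ) : shearGens m e m = of m :=
  if_pos rfl

theorem shearGens_of_ne {m j : α} (e : α → ℤ × ℤ) (hj : j ≠ m) :
    shearGens m e j = of m ^ (e j).1 * of j * of m ^ (e j).2 :=
  if_neg hj

@[simp] theorem shearGens_zero (m : α) : shearGens m 0 = of := by
  ext j
  by_cases hj : j = m
  · simp [hj]
  · simp [shearGens_of_ne _ hj]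

theorem lift_shearGens_shearGens (m : α) (e e' : α → ℤ × ℤ) (j : α) :
    lift (shearGens m e) (shearGens m e' j) = shearGens m (e + e') j := by
  by_cases hj : j = m
  · simp [hj]
  · simp only [shearGens_of_ne _ hj, _root_.map_mul, map_zpow, lift_apply_of, shearGens_self,
      Pi.add_apply, Prod.fst_add, Prod.snd_add]
    group

def shear (m : α) : Multiplicative (α → ℤ × ℤ) →* MulAut (FreeGroup α) where
  toFun e := MonoidHom.toMulEquiv (lift (shearGens m e.toAdd)) (lift (shearGens m (-e.toAdd)))
    (ext_hom _ _ fun j => by simp [lift_shearGens_shearGens])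
    (ext_hom _ _ fun j => by simp [lift_shearGens_shearGens])
  map_one' := mulEquiv_ext fun j => by simp
  map_mul' e e' := mulEquiv_ext fun j => by simp [lift_shearGens_shearGens]

@[simp] theorem shear_apply_of (m : α) (e : Multiplicative (α → ℤ × ℤ)) (j : α) :
    shear m e (of j) = shearGens m e.toAdd j :=
  lift_apply_of

end Shear

section Monomial

variable {α : Type*}

def permAut : Equiv.Perm α →* MulAut (FreeGroup α) where
  toFun σ := freeGroupCongr σ
  map_one' := freeGroupCongr_refl
  map_mul' σ τ := (freeGroupCongr_trans τ σ).symm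

@[simp] theorem permAut_apply_of (σ : Equiv.Perm α) (i : α) : permAut σ (of i) = of (σ i) :=
  map.of

theorem zpow_units_zpow_self {G : Type*} [Group G] (g : G) (u : ℤˣ) :
    (g ^ (u : ℤ)) ^ (u : ℤ) = g := by
  rw [← zpow_mul, ← Units.val_mul, Int.units_mul_self, Units.val_one, zpow_one]

def signAut : (α → ℤˣ) →* MulAut (FreeGroup α) where
  toFun u := MonoidHom.toMulEquiv (lift fun i => of i ^ (u i : ℤ)) (lift fun i => of i ^ (u i : ℤ))
    (ext_hom _ _ fun i => by simp [zpow_units_zpow_self])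
    (ext_hom _ _ fun i => by simp [zpow_units_zpow_self])
  map_one' := mulEquiv_ext fun i => by simp
  map_mul' u v := mulEquiv_ext fun i => by simp [zpow_mul]

@[simp] theorem signAut_apply_of (u : α → ℤˣ) (i : α) : signAut u (of i) = of i ^ (u i : ℤ) :=
  lift_apply_of

end Monomial

@[simp] theorem mkAut_apply (f g : Fin n → FreeGroup (Fin n)) (h₁ h₂) (x : FreeGroup (Fin n)) :
    mkAut f g h₁ h₂ x = lift f x :=
  rfl

@[simp] theorem mkAut_symm_apply (f g : Fin n → FreeGroup (Fin n)) (h₁ h₂)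
    (x : FreeGroup (Fin n)) : (mkAut f g h₁ h₂).symm x = lift g x :=
  rfl

def nielsenGenerators (n : ℕ) : Set (MulAut (FreeGroup (Fin n))) :=
  {ψ | (∃ i j : Fin n, ∃ hij : i ≠ j, ψ = rho i j hij) ∨
    (∃ i j : Fin n, ∃ hij : i ≠ j, ψ = Kc i j hij) ∨ (∃ i : Fin n, ψ = Sinv i)}

theorem rho_mem_closure (i j : Fin n) (hij : i ≠ j) :
    rho i j hij ∈ Subgroup.closure (nielsenGenerators n) :=
  Subgroup.subset_closure (Or.inl ⟨i, j, hij, rfl⟩)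

theorem Kc_mem_closure (i j : Fin n) (hij : i ≠ j) :
    Kc i j hij ∈ Subgroup.closure (nielsenGenerators n) :=
  Subgroup.subset_closure (Or.inr (Or.inl ⟨i, j, hij, rfl⟩))

theorem Sinv_mem_closure (i : Fin n) : Sinv i ∈ Subgroup.closure (nielsenGenerators n) :=
  Subgroup.subset_closure (Or.inr (Or.inr ⟨i, rfl⟩))

theorem shear_single_self {α : Type*} [DecidableEq α] (m : α) (a : ℤ × ℤ) :
    shear m (Multiplicative.ofAdd (Pi.single m a)) = 1 :=
  mulEquiv_ext fun j => by
    by_cases hj : j = m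
    · simp [hj]
    · simp [shearGens_of_ne _ hj, hj]

theorem shear_single_fst {j m : Fin n} (hjm : j ≠ m) :
    shear m (Multiplicative.ofAdd (Pi.single j (1, 0))) = Kc j m hjm * rho j m hjm :=
  mulEquiv_ext fun k => by
    by_cases hk : k = j
    · subst hk
      simp [shearGens_of_ne _ hjm, Kc, rho, hjm.symm]
    · by_cases hkm : k = m
      · subst hkm; simp [Kc, rho, hk]
      · simp [shearGens_of_ne _ hkm, Kc, rho, hk]

theorem shear_single_snd {j m : Fin n} (hjm : j ≠ m) :
    shear m (Multiplicative.ofAdd (Pi.single j (0, 1))) = rho j m hjm :=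
  mulEquiv_ext fun k => by
    by_cases hk : k = j
    · subst hk
      simp [shearGens_of_ne _ hjm, rho]
    · by_cases hkm : k = m
      · subst hkm; simp [rho, hk]
      · simp [shearGens_of_ne _ hkm, rho, hk]

theorem shear_mem_closure (m : Fin n) (e : Multiplicative (Fin n → ℤ × ℤ)) :
    shear m e ∈ Subgroup.closure (nielsenGenerators n) := by
  refine (shear m).map_mem_of_map_ofAdd_single_mem (S := (Subgroup.closure _).toSubmonoid)
    (fun j a => ?_) e
  by_cases hjm : j = m
  · subst hjm
    rw [shear_single_self]
    exact one_mem _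
  have hsplit : (Multiplicative.ofAdd (Pi.single j a) : Multiplicative (Fin n → ℤ × ℤ)) =
      Multiplicative.ofAdd (Pi.single j (1, 0)) ^ a.1 *
        Multiplicative.ofAdd (Pi.single j (0, 1)) ^ a.2 := by
    rw [← ofAdd_zsmul, ← ofAdd_zsmul, ← ofAdd_add, ← Pi.single_smul, ← Pi.single_smul,
      ← Pi.single_add]
    simp
  rw [hsplit, _root_.map_mul, map_zpow, map_zpow, shear_single_fst hjm, shear_single_snd hjm]
  exact mul_mem (zpow_mem (mul_mem (Kc_mem_closure j m hjm) (rho_mem_closure j m hjm)) _)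
    (zpow_mem (rho_mem_closure j m hjm) _)

theorem signAut_mulSingle_neg_one (i : Fin n) : signAut (Pi.mulSingle i (-1)) = Sinv i :=
  mulEquiv_ext fun k => by
    by_cases hk : k = i
    · subst hk; simp [Sinv]
    · simp [Sinv, hk]

theorem signAut_mem_closure (u : Fin n → ℤˣ) :
    signAut u ∈ Subgroup.closure (nielsenGenerators n) := by
  refine signAut.map_mem_of_map_mulSingle_mem (S := (Subgroup.closure _).toSubmonoid)
    (fun i s => ?_) u
  rcases Int.units_eq_one_or s with rfl | rfl
  · rw [Pi.mulSingle_one, _root_.map_one]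
    exact one_mem _
  · rw [signAut_mulSingle_neg_one]
    exact Sinv_mem_closure i

theorem permAut_swap {i j : Fin n} (hij : i ≠ j) :
    permAut (Equiv.swap i j) =
      Sinv i * (rho j i hij.symm)⁻¹ * (Kc j i hij.symm)⁻¹ * rho i j hij * (rho j i hij.symm)⁻¹ :=
  mulEquiv_ext fun k => by
    by_cases hki : k = i
    · subst hki
      simp [Sinv, Kc, rho, hij, hij.symm]
      group
    · by_cases hkj : k = j
      · subst hkj
        simp [Sinv, Kc, rho, hij, hij.symm]
      · simp [Sinv, Kc, rho, hki, hkj, Equiv.swap_apply_of_ne_of_ne hki hkj]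

theorem permAut_mem_closure (σ : Equiv.Perm (Fin n)) :
    permAut σ ∈ Subgroup.closure (nielsenGenerators n) := by
  induction σ using Equiv.Perm.swap_induction_on with
  | one => rw [_root_.map_one]; exact one_mem _
  | swap_mul σ i j hij ih =>
    rw [_root_.map_mul, permAut_swap hij]
    have hρ := inv_mem (rho_mem_closure j i hij.symm)
    exact mul_mem (mul_mem (mul_mem (mul_mem (mul_mem (Sinv_mem_closure i) hρ)
      (inv_mem (Kc_mem_closure j i hij.symm))) (rho_mem_closure i j hij)) hρ) ih

theorem IsWhitehead₁.exists_eq_permAut_mul_signAut {φ : MulAut (FreeGroup (Fin n))}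
    (h : IsWhitehead₁ φ) : ∃ σ u, φ = permAut σ * signAut u := by
  obtain ⟨σ, ε, hε, hφ⟩ := h
  choose u hu using fun i => Int.isUnit_iff.mpr (hε i)
  exact ⟨σ, u, mulEquiv_ext fun i => by simp [hφ, hu]⟩

theorem wletter_eq_zpow (a : Fin n × Bool) :
    wletter a = of a.1 ^ (if a.2 then 1 else -1 : ℤ) := by
  obtain ⟨i, _ | _⟩ := a <;> simp [wletter]

theorem IsWhitehead₂.exists_eq_shear {φ : MulAut (FreeGroup (Fin n))} (h : IsWhitehead₂ φ) :
    ∃ m e, φ = shear m e := by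
  obtain ⟨a, A, -, -, hfix, hφ⟩ := h
  set s : ℤ := if a.2 then 1 else -1
  refine ⟨a.1, Multiplicative.ofAdd fun j =>
    (s * if (j, true) ∈ A then 1 else 0, s * -if (j, false) ∈ A then 1 else 0),
    mulEquiv_ext fun j => ?_⟩
  by_cases hj : j = a.1
  · subst hj
    simp [hfix]
  · rw [hφ j hj, shear_apply_of, shearGens_of_ne _ hj, wletter_eq_zpow, ← zpow_mul, ← zpow_mul]
    rfl

/-- Every Whitehead automorphism lies in the subgroup of `Aut(F_n)` generated by the
right Nielsen automorphisms `ρ i j`, the partial conjugations `K i j`, and the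
inversions `S i`. -/
theorem whitehead_mem_closure_nielsen (n : ℕ) (φ : MulAut (FreeGroup (Fin n)))
    (hφ : IsWhitehead φ) :
    φ ∈ Subgroup.closure {ψ : MulAut (FreeGroup (Fin n)) |
      (∃ i j : Fin n, ∃ hij : i ≠ j, ψ = rho i j hij) ∨
      (∃ i j : Fin n, ∃ hij : i ≠ j, ψ = Kc i j hij) ∨
      (∃ i : Fin n, ψ = Sinv i)} := by
  change φ ∈ Subgroup.closure (nielsenGenerators n)
  rcases hφ with h | h
  · obtain ⟨σ, u, rfl⟩ := h.exists_eq_permAut_mul_signAut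
    exact mul_mem (permAut_mem_closure σ) (signAut_mem_closure u)
  · obtain ⟨m, e, rfl⟩ := h.exists_eq_shear
    exact shear_mem_closure m e

end FoldDecomp
end

section
/- Let Θ : Aut(F_n) → GL_n(ℤ) be the homomorphism sending an automorphism φ to the matrix of the induced automorphism of the abelianization ℤ^n of F_n (so the j-th column of Θ(φ) is the image in ℤ^n of φ(x_j)). Then the image of Fix_c({x_{m+1}, …, x_n}) under Θ is exactly G_m, the subgroup {M ∈ GL_n(ℤ) : M e_j = e_j for all m+1 ≤ j ≤ n}. -/
/-! Θ is a homomorphism and conjugation is invisible in the abelianization, so Θ maps `Fix_c`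
into `G_m`. Conversely every matrix of `G_m` is already the image of an automorphism in
`Fix ⊆ Fix_c`, by induction on `m`: to reduce `M ∈ G_{k+1}` to `G_k`, note that the images of
the Nielsen transvections `x_q ↦ x_q x_p^c` with `q ≤ k` act on the left as row operations with
source row `q ≤ k`, and those of `x_k ↦ x_k x_a^c` act on the right by adding multiples of the
standard columns `e_a`, `a > k`, to column `k`. A Euclidean algorithm on column `k`, measured by
the sum of the absolute values of its entries, makes that column `±e_p` with `p ≤ k`; swapping
`x_p, x_k` and inverting `x_k` if needed then lands in `G_k`. -/

namespace FoldDecomp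

open FreeGroup

variable {n : ℕ}
/-- `Fix(Y)` for `Y = {x_{m+1}, …, x_n}` (zero-indexed: the generators `xᵢ` with `m ≤ i`):
the subgroup of automorphisms fixing each element of `Y`. -/
def fixSubgroup (n m : ℕ) : Subgroup (MulAut (FreeGroup (Fin n))) where
  carrier := {φ | ∀ i : Fin n, m ≤ (i : ℕ) → φ (of i) = of i}
  one_mem' := by intro i _; rfl
  mul_mem' := by
    intro a b ha hb i hi
    show a (b (of i)) = of i
    rw [hb i hi, ha i hi]
  inv_mem' := by
    intro a ha i hi
    show a⁻¹ (of i) = of i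
    conv_lhs => rw [← ha i hi]
    exact a.left_inv _

/-- `Fix_c(Y)` for `Y = {x_{m+1}, …, x_n}` (zero-indexed: the generators `xᵢ` with `m ≤ i`):
the subgroup of automorphisms sending each element of `Y` to a conjugate of itself. -/
def fixcSubgroup (n m : ℕ) : Subgroup (MulAut (FreeGroup (Fin n))) where
  carrier := {φ | ∀ i : Fin n, m ≤ (i : ℕ) → IsConj (of i) (φ (of i))}
  one_mem' := by intro i _; exact IsConj.refl _
  mul_mem' := by
    intro a b ha hb i hi
    show IsConj (of i) (a (b (of i)))
    exact (ha i hi).trans ((a : FreeGroup (Fin n) →* FreeGroup (Fin n)).map_isConj (hb i hi))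
  inv_mem' := by
    intro a ha i hi
    show IsConj (of i) (a⁻¹ (of i))
    have h := ((a⁻¹ : MulAut (FreeGroup (Fin n))) :
      FreeGroup (Fin n) →* FreeGroup (Fin n)).map_isConj (ha i hi)
    try simp only [MulEquiv.coe_toMonoidHom] at h
    rw [show ((a⁻¹ : MulAut (FreeGroup (Fin n))) : FreeGroup (Fin n) →* FreeGroup (Fin n))
      (a (of i)) = of i from MulAut.inv_apply_self _ a (of i)] at h
    exact h.symm

/-- `IA_n`: the subgroup of automorphisms acting trivially on the abelianization
`H₁(F_n)`. -/
def IA (n : ℕ) : Subgroup (MulAut (FreeGroup (Fin n))) where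
  carrier := {φ | ∀ w : FreeGroup (Fin n),
    (Abelianization.of (φ w) : Abelianization (FreeGroup (Fin n))) = Abelianization.of w}
  one_mem' := by intro w; rfl
  mul_mem' := by
    intro a b ha hb w
    show (Abelianization.of (a (b w)) : Abelianization (FreeGroup (Fin n))) = _
    rw [ha (b w), hb w]
  inv_mem' := by
    intro a ha w
    show (Abelianization.of (a⁻¹ w) : Abelianization (FreeGroup (Fin n))) = _
    have := ha (a⁻¹ w)
    rw [MulAut.apply_inv_self _ a w] at this
    exact this.symm

/-- The exponent sum of the generator `xᵢ` in a word of the free group, as a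
homomorphism to `Multiplicative ℤ`. -/
def expSum (i : Fin n) : FreeGroup (Fin n) →* Multiplicative ℤ :=
  FreeGroup.lift fun k => Multiplicative.ofAdd (if k = i then (1 : ℤ) else 0)

/-- `Θ` at the matrix level: the matrix of the automorphism of the abelianization `ℤⁿ`
induced by `φ`; its `j`-th column is the image in `ℤⁿ` of `φ(x_j)`. -/
def matOf (φ : MulAut (FreeGroup (Fin n))) : Matrix (Fin n) (Fin n) ℤ :=
  Matrix.of fun i j => Multiplicative.toAdd (expSum i (φ (FreeGroup.of j)))

open scoped Matrix

lemma toAdd_expSum_of (i j : Fin n) :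
    Multiplicative.toAdd (expSum i (of j)) = (Pi.single j 1 : Fin n → ℤ) i := by
  simp [expSum, Pi.single_apply, eq_comm]

lemma toAdd_expSum_map (φ : MulAut (FreeGroup (Fin n))) (i : Fin n) (w : FreeGroup (Fin n)) :
    Multiplicative.toAdd (expSum i (φ w)) =
      ∑ t, matOf φ i t * Multiplicative.toAdd (expSum t w) := by
  induction w using FreeGroup.induction_on with
  | C1 => simp
  | of x => simp [toAdd_expSum_of, Pi.single_apply, matOf]
  | inv_of x ih => simp [ih]
  | mul x y ihx ihy => simp [ihx, ihy, mul_add, Finset.sum_add_distrib]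

lemma matOf_one : matOf (1 : MulAut (FreeGroup (Fin n))) = 1 := by
  ext i j
  simp [matOf, toAdd_expSum_of, Pi.single_apply, Matrix.one_apply]

lemma matOf_mul (φ ψ : MulAut (FreeGroup (Fin n))) : matOf (φ * ψ) = matOf φ * matOf ψ := by
  ext i j
  exact toAdd_expSum_map φ i (ψ (of j))

lemma matOf_mulVec_single (φ : MulAut (FreeGroup (Fin n))) (j : Fin n) :
    matOf φ *ᵥ Pi.single j 1 = fun i => Multiplicative.toAdd (expSum i (φ (of j))) := by
  rw [Matrix.mulVec_single_one]
  rfl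

def theta : MulAut (FreeGroup (Fin n)) →* GL (Fin n) ℤ :=
  MonoidHom.toHomUnits
    { toFun := matOf
      map_one' := matOf_one
      map_mul' := matOf_mul }

@[simp]
lemma coe_theta (φ : MulAut (FreeGroup (Fin n))) :
    (theta φ : Matrix (Fin n) (Fin n) ℤ) = matOf φ :=
  rfl

/-- The group `G_m`. -/
def fixBasisSubgroup (n m : ℕ) : Subgroup (GL (Fin n) ℤ) where
  carrier := {M | ∀ j : Fin n, m ≤ (j : ℕ) →
    (M : Matrix (Fin n) (Fin n) ℤ) *ᵥ Pi.single j 1 = Pi.single j 1}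
  one_mem' j _ := by rw [Units.val_one, Matrix.one_mulVec]
  mul_mem' {A B} hA hB j hj := by
    rw [Units.val_mul, ← Matrix.mulVec_mulVec, hB j hj, hA j hj]
  inv_mem' {A} hA j hj := by
    conv_lhs => rw [← hA j hj, Matrix.mulVec_mulVec, ← Units.val_mul, inv_mul_cancel,
      Units.val_one, Matrix.one_mulVec]

lemma mulVec_single_eq_of_isConj {φ : MulAut (FreeGroup (Fin n))} {j : Fin n}
    (h : IsConj (of j) (φ (of j))) : matOf φ *ᵥ Pi.single j 1 = Pi.single j 1 := by
  ext i
  rw [matOf_mulVec_single]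
  dsimp only
  rw [← isConj_iff_eq.mp ((expSum i).map_isConj h), toAdd_expSum_of]

lemma map_fixcSubgroup_le (m : ℕ) : (fixcSubgroup n m).map theta ≤ fixBasisSubgroup n m := by
  rintro _ ⟨φ, hφ, rfl⟩ j hj
  exact mulVec_single_eq_of_isConj (hφ j hj)

lemma fixSubgroup_le_fixcSubgroup (m : ℕ) : fixSubgroup n m ≤ fixcSubgroup n m :=
  fun _ hφ i hi => (hφ i hi).symm ▸ IsConj.refl _

lemma map_fixSubgroup_le (m : ℕ) : (fixSubgroup n m).map theta ≤ fixBasisSubgroup n m :=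
  (Subgroup.map_mono (fixSubgroup_le_fixcSubgroup m)).trans (map_fixcSubgroup_le m)

lemma fixSubgroup_mono {m m' : ℕ} (h : m ≤ m') : fixSubgroup n m ≤ fixSubgroup n m' :=
  fun _ hφ i hi => hφ i (h.trans hi)

section Substitution

variable {α : Type*}

def substAut (f g : α → FreeGroup α) (hgf : ∀ a, lift g (f a) = of a)
    (hfg : ∀ a, lift f (g a) = of a) : MulAut (FreeGroup α) :=
  (lift f).toMulEquiv (lift g) (ext_hom _ _ fun a => by simp [hgf])
    (ext_hom _ _ fun a => by simp [hfg])

@[simp]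
lemma substAut_apply_of (f g : α → FreeGroup α) (hgf hfg) (a : α) :
    substAut f g hgf hfg (of a) = f a :=
  lift_apply_of

variable [DecidableEq α]

lemma lift_update_transvection {i j : α} (hij : i ≠ j) (c d : ℤ) (hdc : d + c = 0) (a : α) :
    lift (Function.update of j (of j * of i ^ d)) (Function.update of j (of j * of i ^ c) a) =
      of a := by
  rcases eq_or_ne a j with rfl | ha
  · simp [hij, mul_assoc, ← zpow_add, hdc]
  · simp [ha]

/-- The Nielsen transvection `x_j ↦ x_j x_i^c`. -/
def transvectionAut {i j : α} (hij : i ≠ j) (c : ℤ) : MulAut (FreeGroup α) :=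
  substAut _ _ (lift_update_transvection hij c (-c) (neg_add_cancel c))
    (lift_update_transvection hij (-c) c (add_neg_cancel c))

lemma lift_update_zpow (j : α) (u v : ℤˣ) (hvu : v * u = 1) (a : α) :
    lift (Function.update of j (of j ^ (v : ℤ))) (Function.update of j (of j ^ (u : ℤ)) a) =
      of a := by
  rcases eq_or_ne a j with rfl | ha
  · simp [← zpow_mul, ← Units.val_mul, hvu]
  · simp [ha]

/-- `x_j ↦ x_j^u`. -/
def zpowAut (j : α) (u : ℤˣ) : MulAut (FreeGroup α) :=
  substAut _ _ (lift_update_zpow j u u⁻¹ (inv_mul_cancel u))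
    (lift_update_zpow j u⁻¹ u (mul_inv_cancel u))

end Substitution

lemma matOf_transvectionAut {i j : Fin n} (hij : i ≠ j) (c : ℤ) :
    matOf (transvectionAut hij c) = Matrix.transvection i j c := by
  ext a b
  rcases eq_or_ne b j with rfl | hb
  · simp [matOf, transvectionAut, Matrix.transvection, toAdd_expSum_of, Pi.single_apply,
      Matrix.one_apply, Matrix.single_apply, eq_comm]
  · simp [matOf, transvectionAut, Matrix.transvection, toAdd_expSum_of, Pi.single_apply,
      Matrix.one_apply, hb, hb.symm]

lemma matOf_zpowAut_mulVec_single (j : Fin n) (u : ℤˣ) :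
    matOf (zpowAut j u) *ᵥ Pi.single j 1 = Pi.single j (u : ℤ) := by
  rw [matOf_mulVec_single]
  ext i
  simp [zpowAut, toAdd_expSum_of, Pi.single_apply]

lemma matOf_freeGroupCongr_mulVec_single (σ : Equiv.Perm (Fin n)) (j : Fin n) :
    matOf (freeGroupCongr σ) *ᵥ Pi.single j 1 = Pi.single (σ j) 1 := by
  rw [matOf_mulVec_single]
  ext i
  simp [toAdd_expSum_of]

lemma transvectionAut_mem_fixSubgroup {m : ℕ} {i j : Fin n} (hij : i ≠ j) (hj : (j : ℕ) < m)
    (c : ℤ) : transvectionAut hij c ∈ fixSubgroup n m := by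
  intro a ha
  have : a ≠ j := by rintro rfl; omega
  simp [transvectionAut, this]

lemma zpowAut_mem_fixSubgroup {m : ℕ} {j : Fin n} (hj : (j : ℕ) < m) (u : ℤˣ) :
    zpowAut j u ∈ fixSubgroup n m := by
  intro a ha
  have : a ≠ j := by rintro rfl; omega
  simp [zpowAut, this]

lemma freeGroupCongr_mem_fixSubgroup {m : ℕ} {σ : Equiv.Perm (Fin n)}
    (hσ : ∀ i : Fin n, m ≤ (i : ℕ) → σ i = i) :
    freeGroupCongr σ ∈ fixSubgroup n m := by
  intro a ha
  simp [hσ a ha]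

lemma isUnit_of_mulVec_single_eq {ι R : Type*} [Fintype ι] [DecidableEq ι] [CommRing R]
    (M : GL ι R) {j p : ι} {g : R} (h : (M : Matrix ι ι R) *ᵥ Pi.single j 1 = Pi.single p g) :
    IsUnit g := by
  have h' : ((M⁻¹ * M : GL ι R) : Matrix ι ι R) *ᵥ Pi.single j 1 =
      ((M⁻¹ : GL ι R) : Matrix ι ι R) *ᵥ Pi.single p g := by
    rw [Units.val_mul, ← Matrix.mulVec_mulVec, h]
  rw [inv_mul_cancel, Units.val_one, Matrix.one_mulVec] at h'
  have hj := congrFun h' j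
  simp only [Pi.single_eq_same, Matrix.mulVec_single] at hj
  exact IsUnit.of_mul_eq_one_right _ hj.symm

lemma mem_fixBasisSubgroup_of_succ {k : Fin n} {M : GL (Fin n) ℤ}
    (hM : M ∈ fixBasisSubgroup n (k + 1))
    (hk : (M : Matrix (Fin n) (Fin n) ℤ) *ᵥ Pi.single k 1 = Pi.single k 1) :
    M ∈ fixBasisSubgroup n k := by
  intro j hj
  rcases hj.lt_or_eq with hj | hj
  · exact hM j hj
  · rwa [Fin.ext hj] at hk

def colNorm (k : Fin n) (M : Matrix (Fin n) (Fin n) ℤ) : ℕ :=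
  ∑ a, (M a k).natAbs

lemma colNorm_lt {k p : Fin n} {A B : Matrix (Fin n) (Fin n) ℤ} (hB : ∀ a ≠ p, B a k = A a k)
    (hp : (B p k).natAbs < (A p k).natAbs) : colNorm k B < colNorm k A := by
  refine Finset.sum_lt_sum (fun a _ => ?_) ⟨p, Finset.mem_univ _, hp⟩
  rcases eq_or_ne a p with rfl | ha
  exacts [hp.le, (hB a ha) ▸ le_rfl]

lemma colNorm_mul_transvection_lt {k a : Fin n} {M : Matrix (Fin n) (Fin n) ℤ}
    (hcol : M *ᵥ Pi.single a 1 = Pi.single a 1) (h : M a k ≠ 0) :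
    colNorm k (M * Matrix.transvection a k (-M a k)) < colNorm k M := by
  have hMa (b : Fin n) : M b a = (Pi.single a 1 : Fin n → ℤ) b := by
    rw [← hcol, Matrix.mulVec_single_one, Matrix.col_apply]
  refine colNorm_lt (p := a) (fun b hb => ?_) ?_ <;>
    simp only [Matrix.mul_transvection_apply_same, hMa]
  · simp [hb]
  · simpa using h

lemma colNorm_transvection_mul_lt {k p q : Fin n} {M : Matrix (Fin n) (Fin n) ℤ}
    (hq : M q k ≠ 0) (hle : (M q k).natAbs ≤ (M p k).natAbs) :
    colNorm k (Matrix.transvection p q (-(M p k / M q k)) * M) < colNorm k M := by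
  refine colNorm_lt (p := p) (fun a ha => Matrix.transvection_mul_apply_of_ne _ _ _ _ ha _ _) ?_
  have hrem : M p k + -(M p k / M q k) * M q k = M p k % M q k := by
    rw [Int.emod_def]; ring
  have hnonneg := Int.emod_nonneg (M p k) hq
  have hlt := Int.emod_lt (M p k) hq
  rw [Matrix.transvection_mul_apply_same, hrem]
  omega

lemma mem_map_fixSubgroup_of_col_eq_single {k : Fin n}
    (ih : fixBasisSubgroup n k ≤ (fixSubgroup n (k + 1)).map theta) {M : GL (Fin n) ℤ}
    (hM : M ∈ fixBasisSubgroup n (k + 1)) {p : Fin n} (hp : p ≤ k)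
    (hcol : ∀ a ≠ p, (M : Matrix (Fin n) (Fin n) ℤ) a k = 0) :
    M ∈ (fixSubgroup n (k + 1)).map theta := by
  have hMk : (M : Matrix (Fin n) (Fin n) ℤ) *ᵥ Pi.single k 1 =
      Pi.single p ((M : Matrix (Fin n) (Fin n) ℤ) p k) := by
    ext a
    rw [Matrix.mulVec_single_one, Matrix.col_apply, Pi.single_apply]
    split_ifs with ha
    · rw [ha]
    · exact hcol a ha
  obtain ⟨u, hu⟩ := isUnit_of_mulVec_single_eq M hMk
  have hp' : (p : ℕ) ≤ k := hp
  have hP : theta (freeGroupCongr (Equiv.swap p k)) ∈ (fixSubgroup n (k + 1)).map theta :=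
    Subgroup.mem_map_of_mem _ <| freeGroupCongr_mem_fixSubgroup fun i hi =>
      Equiv.swap_apply_of_ne_of_ne (Fin.ne_of_val_ne (by omega)) (Fin.ne_of_val_ne (by omega))
  have hD : theta (zpowAut k u⁻¹) ∈ (fixSubgroup n (k + 1)).map theta :=
    Subgroup.mem_map_of_mem _ (zpowAut_mem_fixSubgroup (Nat.lt_succ_self _) _)
  -- `M` sends `u⁻¹ e_k` to `e_p`, which the swap `x_p ↔ x_k` sends back to `e_k`.
  have hPMD : ((theta (freeGroupCongr (Equiv.swap p k)) * M * theta (zpowAut k u⁻¹) :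
      GL (Fin n) ℤ) : Matrix (Fin n) (Fin n) ℤ) *ᵥ Pi.single k 1 = Pi.single k 1 := by
    rw [Units.val_mul, Units.val_mul, ← Matrix.mulVec_mulVec, ← Matrix.mulVec_mulVec, coe_theta,
      coe_theta, matOf_zpowAut_mulVec_single, ← mul_one ((u⁻¹ : ℤˣ) : ℤ), ← smul_eq_mul,
      Pi.single_smul', Matrix.mulVec_smul, hMk, ← hu, ← Pi.single_smul', smul_eq_mul,
      Units.inv_mul, matOf_freeGroupCongr_mulVec_single, Equiv.swap_apply_left]
  have hS := map_fixSubgroup_le (n := n) (k + 1)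
  have := ih (mem_fixBasisSubgroup_of_succ (mul_mem (mul_mem (hS hP) hM) (hS hD)) hPMD)
  rwa [Subgroup.mul_mem_cancel_right _ hD, Subgroup.mul_mem_cancel_left _ hP] at this

lemma exists_pair_natAbs_le {ι : Type*} [LinearOrder ι] {k : ι} {v : ι → ℤ}
    (hsingle : ∀ p ≤ k, ∃ a ≠ p, v a ≠ 0) (hbelow : ∀ a, k < a → v a = 0) :
    ∃ p q, p ≠ q ∧ v q ≠ 0 ∧ q ≤ k ∧ (v q).natAbs ≤ (v p).natAbs := by
  obtain ⟨a, -, ha⟩ := hsingle k le_rfl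
  have hak : a ≤ k := not_lt.mp fun h => ha (hbelow a h)
  obtain ⟨b, hba, hb⟩ := hsingle a hak
  have hbk : b ≤ k := not_lt.mp fun h => hb (hbelow b h)
  rcases le_total (v a).natAbs (v b).natAbs with h | h
  exacts [⟨b, a, hba, ha, hak, h⟩, ⟨a, b, hba.symm, hb, hbk, h⟩]

lemma fixBasisSubgroup_succ_le {k : Fin n}
    (ih : fixBasisSubgroup n k ≤ (fixSubgroup n (k + 1)).map theta) :
    fixBasisSubgroup n (k + 1) ≤ (fixSubgroup n (k + 1)).map theta := by
  intro M hM
  induction hN : colNorm k M using Nat.strong_induction_on generalizing M with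
  | _ N IH =>
  have hS := map_fixSubgroup_le (n := n) (k + 1)
  by_cases hsingle : ∃ p ≤ k, ∀ a ≠ p, (M : Matrix (Fin n) (Fin n) ℤ) a k = 0
  · obtain ⟨p, hp, hcol⟩ := hsingle
    exact mem_map_fixSubgroup_of_col_eq_single ih hM hp hcol
  push Not at hsingle
  by_cases hbelow : ∃ a, k < a ∧ (M : Matrix (Fin n) (Fin n) ℤ) a k ≠ 0
  · obtain ⟨a, hka, ha⟩ := hbelow
    have hY : theta (transvectionAut hka.ne' (-(M : Matrix (Fin n) (Fin n) ℤ) a k)) ∈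
        (fixSubgroup n (k + 1)).map theta :=
      Subgroup.mem_map_of_mem _ (transvectionAut_mem_fixSubgroup _ (Nat.lt_succ_self _) _)
    have hlt := colNorm_mul_transvection_lt (hM a hka) ha
    rw [← matOf_transvectionAut hka.ne', ← coe_theta, ← Units.val_mul, hN] at hlt
    exact (Subgroup.mul_mem_cancel_right _ hY).1 (IH _ hlt (mul_mem hM (hS hY)) rfl)
  push Not at hbelow
  obtain ⟨p, q, hpq, hq, hqk, hle⟩ := exists_pair_natAbs_le hsingle hbelow
  have hX : theta (transvectionAut hpq (-((M : Matrix (Fin n) (Fin n) ℤ) p k /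
      (M : Matrix (Fin n) (Fin n) ℤ) q k))) ∈ (fixSubgroup n (k + 1)).map theta :=
    Subgroup.mem_map_of_mem _ (transvectionAut_mem_fixSubgroup _ (Nat.lt_succ_of_le hqk) _)
  have hlt := colNorm_transvection_mul_lt hq hle
  rw [← matOf_transvectionAut hpq, ← coe_theta, ← Units.val_mul, hN] at hlt
  exact (Subgroup.mul_mem_cancel_left _ hX).1 (IH _ hlt (mul_mem (hS hX) hM) rfl)

lemma fixBasisSubgroup_le_map_fixSubgroup {m : ℕ} (hm : m ≤ n) :
    fixBasisSubgroup n m ≤ (fixSubgroup n m).map theta := by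
  induction m with
  | zero =>
    intro M hM
    have : M = 1 := Units.ext <| Matrix.ext_of_mulVec_single fun j => by
      rw [hM j (Nat.zero_le _), Units.val_one, Matrix.one_mulVec]
    exact this ▸ one_mem _
  | succ m ih =>
    exact fixBasisSubgroup_succ_le (k := ⟨m, hm⟩)
      ((ih (Nat.le_of_succ_le hm)).trans (Subgroup.map_mono (fixSubgroup_mono (Nat.le_succ m))))

/-- The image of `Fix_c({x_{m+1}, …, x_n})` under `Θ : Aut(F_n) → GL_n(ℤ)` is exactly
`G_m = {M ∈ GL_n(ℤ) : M eⱼ = eⱼ for all j > m}` (zero-indexed: `m ≤ j`). -/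
theorem theta_image_fixc (n m : ℕ) (hm : m ≤ n) :
    matOf '' (fixcSubgroup n m : Set (MulAut (FreeGroup (Fin n)))) =
      {M : Matrix (Fin n) (Fin n) ℤ | IsUnit M ∧
        ∀ j : Fin n, m ≤ (j : ℕ) → M.mulVec (Pi.single j 1) = Pi.single j 1} := by
  ext M
  constructor
  · rintro ⟨φ, hφ, rfl⟩
    exact ⟨(theta φ).isUnit, map_fixcSubgroup_le m ⟨φ, hφ, rfl⟩⟩
  · rintro ⟨⟨M, rfl⟩, hM⟩
    obtain ⟨φ, hφ, hφM⟩ := fixBasisSubgroup_le_map_fixSubgroup hm hM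
    exact ⟨φ, fixSubgroup_le_fixcSubgroup m hφ, congrArg Units.val hφM⟩

end FoldDecomp
end

section
/- In Aut(F_n) with n ≥ 2, for every i with 2 ≤ i ≤ n one has the identity S_i = S_1 · ρ_{1i} · ρ_{i1}^{−1} · S_1 · ρ_{1i}^{−1} · S_1 · ρ_{1i} · S_1 · ρ_{i1} · ρ_{1i}^{−1} · S_1. -/
namespace FoldDecomp

open FreeGroup

variable {n : ℕ}

/-- The identity `S_i = S_1 ρ_{1i} ρ_{i1}⁻¹ S_1 ρ_{1i}⁻¹ S_1 ρ_{1i} S_1 ρ_{i1} ρ_{1i}⁻¹ S_1`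
in `Aut(F_n)`, where (zero-indexed) `j` plays the role of the index `1` and `i ≥ 1`. -/
theorem Sinv_eq_word (n : ℕ) (i j : Fin n) (hi : 1 ≤ (i : ℕ)) (hj : (j : ℕ) = 0) :
    Sinv i =
      Sinv j * rho j i (Fin.ne_of_val_ne (by omega)) *
        (rho i j (Fin.ne_of_val_ne (by omega)))⁻¹ * Sinv j *
        (rho j i (Fin.ne_of_val_ne (by omega)))⁻¹ * Sinv j *
        rho j i (Fin.ne_of_val_ne (by omega)) * Sinv j *
        rho i j (Fin.ne_of_val_ne (by omega)) *
        (rho j i (Fin.ne_of_val_ne (by omega)))⁻¹ * Sinv j := by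
  have hij : i ≠ j := Fin.ne_of_val_ne (by omega)
  apply MulEquiv.toMonoidHom_injective
  apply FreeGroup.ext_hom
  intro k
  simp only [MulEquiv.coe_toMonoidHom, MulAut.mul_apply, MulAut.inv_def]
  by_cases hk : k = i
  · subst hk
    simp [Sinv, rho, mkAut, MulEquiv.symm_mk, hij, hij.symm]
  · by_cases hk2 : k = j
    · subst hk2
      simp [Sinv, rho, mkAut, MulEquiv.symm_mk, hij, hij.symm, hk]
    · simp [Sinv, rho, mkAut, MulEquiv.symm_mk, hk, hk2]

end FoldDecomp
end

section
/- In Aut(F_n), for distinct indices p, q, k one has the identity ρ_{pk}^{−1} K_{kpq} ρ_{pk} = K_{qk}^{−1} K_{qp} K_{pq}^{−1} K_{qp}^{−1} K_{kpq} K_{pqk} K_{qk} K_{kq}. -/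
namespace FoldDecomp

open FreeGroup

variable {n : ℕ}

/-
The left-hand side multiplies both `x_p` and `x_k` on the right by `c = [x_p x_k⁻¹, x_q]` and fixes
the other generators: `ρ_{pk}` sends `x_p ↦ x_p x_k`, then `K_{kpq}` appends `[x_p, x_q]` to `x_k`,
and `ρ_{pk}⁻¹` turns `x_p` into `x_p x_k⁻¹` again, so that `x_p x_k [x_p, x_q]` becomes `x_p c`.
An automorphism of a free group is determined by the images of the generators, so it remains to
check, by free reduction, that the right-hand side sends `x_p, x_k, x_q` to `x_p c, x_k c, x_q`.
-/

open scoped commutatorElement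

theorem mulAut_freeGroup_ext {α : Type*} {a b : MulAut (FreeGroup α)}
    (h : ∀ i, a (of i) = b (of i)) : a = b :=
  MulEquiv.toMonoidHom_injective (FreeGroup.ext_hom _ _ h)

section apply

variable (f g : Fin n → FreeGroup (Fin n)) (h1 : ∀ k, FreeGroup.lift g (f k) = of k)
  (h2 : ∀ k, FreeGroup.lift f (g k) = of k) (x : FreeGroup (Fin n))

@[simp] lemma mkAut_apply_s15 : mkAut f g h1 h2 x = FreeGroup.lift f x := rfl

@[simp] lemma mkAut_symm_apply_s15 : (mkAut f g h1 h2).symm x = FreeGroup.lift g x := rfl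

end apply

variable (l : Fin n)

@[simp] lemma rho_apply_of (i j : Fin n) (h : i ≠ j) :
    rho i j h (of l) = if l = i then of i * of j else of l := by
  simp [rho]

@[simp] lemma rho_symm_apply_of (i j : Fin n) (h : i ≠ j) :
    (rho i j h).symm (of l) = if l = i then of i * (of j)⁻¹ else of l := by
  simp [rho]

@[simp] lemma Kc_apply_of (i j : Fin n) (h : i ≠ j) :
    Kc i j h (of l) = if l = i then of j * of i * (of j)⁻¹ else of l := by
  simp [Kc]

@[simp] lemma Kc_symm_apply_of (i j : Fin n) (h : i ≠ j) :
    (Kc i j h).symm (of l) = if l = i then (of j)⁻¹ * of i * of j else of l := by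
  simp [Kc]

@[simp] lemma Kcom_apply_of (i j k : Fin n) (hji : j ≠ i) (hki : k ≠ i) :
    Kcom i j k hji hki (of l) = if l = i then of i * ⁅of j, of k⁆ else of l := by
  simp [Kcom, commutatorElement_def]

lemma rho_inv_mul_Kcom_mul_rho_apply_of (p q k : Fin n) (hpq : p ≠ q) (hpk : p ≠ k)
    (hqk : q ≠ k) :
    ((rho p k hpk)⁻¹ * Kcom k p q hpk hqk * rho p k hpk) (of l) =
      if l = p ∨ l = k then of l * ⁅of p * (of k)⁻¹, of q⁆ else of l := by
  rcases eq_or_ne l p with rfl | hlp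
  · simp [hpq.symm, hpk, hpk.symm, commutatorElement_def]
  rcases eq_or_ne l k with rfl | hlk
  · simp [hlp, hpq.symm, commutatorElement_def]
  · simp [hlp, hlk]

/-- The identity
`ρ_{pk}⁻¹ K_{kpq} ρ_{pk} = K_{qk}⁻¹ K_{qp} K_{pq}⁻¹ K_{qp}⁻¹ K_{kpq} K_{pqk} K_{qk} K_{kq}`
in `Aut(F_n)`, for distinct indices `p, q, k`. -/
theorem rho_inv_Kcom_conj (n : ℕ) (p q k : Fin n) (hpq : p ≠ q) (hpk : p ≠ k)
    (hqk : q ≠ k) :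
    (rho p k hpk)⁻¹ * Kcom k p q hpk hqk * rho p k hpk =
      (Kc q k hqk)⁻¹ * Kc q p (Ne.symm hpq) * (Kc p q hpq)⁻¹ * (Kc q p (Ne.symm hpq))⁻¹ *
        Kcom k p q hpk hqk * Kcom p q k (Ne.symm hpq) (Ne.symm hpk) *
        Kc q k hqk * Kc k q (Ne.symm hqk) := by
  refine mulAut_freeGroup_ext fun l => ?_
  rw [rho_inv_mul_Kcom_mul_rho_apply_of l p q k hpq]
  rcases eq_or_ne l p with rfl | hlp
  · simp [hpq, hpk, hqk, hpq.symm, hpk.symm, hqk.symm, commutatorElement_def]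
    group
  rcases eq_or_ne l k with rfl | hlk
  · simp [hlp, hpq, hqk, hpq.symm, hqk.symm, commutatorElement_def]
    group
  rcases eq_or_ne l q with rfl | hlq
  · simp [hlp, hlk, hpq, hpk.symm, hqk.symm, commutatorElement_def]
    group
  · simp [hlp, hlk, hlq]

end FoldDecomp
end
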